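/- arXiv:2009.04349 — 2 statements merged into one kernel-verified Lean document; each statement's English description precedes it below -/
import Mathlib

section
/- Let Q₁, Q₂ be key polynomials for ν of the same degree with ν(Q₁) < ν(Q₂), and let f be a nonzero polynomial with δ_{Q₂}(f) > 0. Then ν_{Q₁}(f) < ν_{Q₂}(f). -/
open Polynomial

variable {K : Type*} [Field K]

/-- `ν` is a (rank one, real-valued) valuation on `K[x]`, specified on nonzero
polynomials. -/
def IsVal {K : Type*} [Field K] (ν : Polynomial K → ℝ) : Prop :=
  (∀ f g : Polynomial K, f ≠ 0 → g ≠ 0 → ν (f * g) = ν f + ν g) ∧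
  (∀ f g : Polynomial K, f ≠ 0 → g ≠ 0 → f + g ≠ 0 → min (ν f) (ν g) ≤ ν (f + g))

/-- The level `ε(f)` of a nonzero polynomial: the maximum of
`(ν f - ν (∂_b f))/b` over `b ≥ 1` (with `∂_b` the Hasse derivatives). -/
noncomputable def eps {K : Type*} [Field K] (ν : Polynomial K → ℝ) (f : Polynomial K) : ℝ :=
  sSup {r : ℝ | ∃ b : ℕ, 1 ≤ b ∧ hasseDeriv b f ≠ 0 ∧ r = (ν f - ν (hasseDeriv b f)) / b}

/-- The set `I(f)` of indices where the bound `ν(∂_b f) ≥ ν f - b ε(f)` is an equality. -/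
def Iset {K : Type*} [Field K] (ν : Polynomial K → ℝ) (f : Polynomial K) : Set ℕ :=
  {b | 1 ≤ b ∧ hasseDeriv b f ≠ 0 ∧ ν (hasseDeriv b f) = ν f - b * eps ν f}

/-- `Q` is a key polynomial for `ν`. -/
def IsKeyPol {K : Type*} [Field K] (ν : Polynomial K → ℝ) (Q : Polynomial K) : Prop :=
  Q.Monic ∧ 0 < Q.natDegree ∧
    ∀ f : Polynomial K, f ≠ 0 → f.natDegree < Q.natDegree → eps ν f < eps ν Q

/-- The coefficients of the `Q`-expansion of `f`:  `f = Σ i, qc Q f i * Q ^ i`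
with `deg (qc Q f i) < deg Q`. -/
noncomputable def qc {K : Type*} [Field K] (Q : Polynomial K) : Polynomial K → ℕ → Polynomial K
  | f, 0 => f %ₘ Q
  | f, (i + 1) => qc Q (f /ₘ Q) i

/-- The degree of the `Q`-expansion of `f`. -/
def degQ {K : Type*} [Field K] (Q f : Polynomial K) : ℕ := f.natDegree / Q.natDegree

/-- The truncation `ν_Q(f) = min_i ν (f_i Q^i)` of `ν` at `Q`. -/
noncomputable def nuQ {K : Type*} [Field K] (ν : Polynomial K → ℝ) (Q f : Polynomial K) : ℝ :=
  sInf {r : ℝ | ∃ i : ℕ, qc Q f i ≠ 0 ∧ r = ν (qc Q f i * Q ^ i)}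

/-- The set `S_Q(f)` of indices attaining the minimum in `ν_Q(f)`. -/
def SQ {K : Type*} [Field K] (ν : Polynomial K → ℝ) (Q f : Polynomial K) : Set ℕ :=
  {i | qc Q f i ≠ 0 ∧ ν (qc Q f i * Q ^ i) = nuQ ν Q f}

/-- `δ_Q(f) = max S_Q(f)`. -/
noncomputable def deltaQ {K : Type*} [Field K] (ν : Polynomial K → ℝ) (Q f : Polynomial K) : ℕ :=
  sSup (SQ ν Q f)

/-- The set `Ψ_α` of key polynomials for `ν` of degree `α`. -/
def Psi {K : Type*} [Field K] (ν : Polynomial K → ℝ) (α : ℕ) : Set (Polynomial K) :=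
  {Q | IsKeyPol ν Q ∧ Q.natDegree = α}

/-- The set `S_α` of (nonzero) polynomials whose value is not computed by any
truncation at a key polynomial of degree `α`. -/
def Slim {K : Type*} [Field K] (ν : Polynomial K → ℝ) (α : ℕ) : Set (Polynomial K) :=
  {f | f ≠ 0 ∧ ∀ Q ∈ Psi ν α, nuQ ν Q f < ν f}

/-- `p` is the characteristic exponent of the residue field of `ν`: either `p = 1`
and all nonzero natural numbers have value `0`, or `p` is a prime, `p` has
positive value (or is `0` in `K`), and naturals prime to `p` have value `0`. -/
def CharExp {K : Type*} [Field K] (ν : Polynomial K → ℝ) (p : ℕ) : Prop :=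
  (p = 1 ∧ ∀ n : ℕ, (n : Polynomial K) ≠ 0 → ν (n : Polynomial K) = 0) ∨
  (p.Prime ∧ ((p : Polynomial K) = 0 ∨ 0 < ν (p : Polynomial K)) ∧
    ∀ n : ℕ, ¬ p ∣ n → ν (n : Polynomial K) = 0)

section Aux

variable (ν : Polynomial K → ℝ)

lemma aux_v_one (hν : IsVal ν) : ν 1 = 0 := by
  have := hν.1 1 1 one_ne_zero one_ne_zero
  simp only [mul_one] at this; linarith

lemma aux_v_negone (hν : IsVal ν) : ν (-1 : K[X]) = 0 := by
  have := hν.1 (-1) (-1) (by norm_num) (by norm_num)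
  simp only [neg_mul, one_mul, neg_neg] at this
  have h1 := aux_v_one ν hν
  linarith

lemma aux_v_neg (hν : IsVal ν) (x : K[X]) (hx : x ≠ 0) : ν (-x) = ν x := by
  have := hν.1 (-1) x (by norm_num) hx
  rw [neg_one_mul] at this
  rw [this, aux_v_negone ν hν]; ring

lemma aux_v_add_eq (hν : IsVal ν) {x y : K[X]} (hx : x ≠ 0)
    (hy : y = 0 ∨ (y ≠ 0 ∧ ν x < ν y)) : x + y ≠ 0 ∧ ν (x + y) = ν x := by
  rcases hy with rfl|⟨hy0, hy⟩
  · simpa using hx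
  · have hne : x + y ≠ 0 := by
      intro h
      have hyx : y = -x := by linear_combination h
      rw [hyx, aux_v_neg ν hν x hx] at hy
      exact lt_irrefl _ hy
    refine ⟨hne, le_antisymm ?_ ?_⟩
    · have hx' : (x + y) + (-y) = x := by ring
      have h1 := hν.2 (x+y) (-y) hne (neg_ne_zero.2 hy0) (by rw [hx']; exact hx)
      rw [hx', aux_v_neg ν hν y hy0] at h1
      rcases min_le_iff.1 h1 with h|h
      · exact h
      · linarith
    · have h1 := hν.2 x y hx hy0 hne
      rw [min_eq_left hy.le] at h1
      exact h1

lemma aux_v_add_ge (hν : IsVal ν) {B : ℝ} {x y : K[X]} (hx : x ≠ 0 → B ≤ ν x)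
    (hy : y ≠ 0 → B ≤ ν y) (hxy : x + y ≠ 0) : B ≤ ν (x + y) := by
  rcases eq_or_ne x 0 with rfl|hx0
  · simpa using hy (by simpa using hxy)
  rcases eq_or_ne y 0 with rfl|hy0
  · simpa using hx (by simpa using hxy)
  calc B ≤ min (ν x) (ν y) := le_min (hx hx0) (hy hy0)
    _ ≤ ν (x + y) := hν.2 x y hx0 hy0 hxy

lemma aux_v_add_gt (hν : IsVal ν) {B : ℝ} {x y : K[X]} (hx : x ≠ 0 → B < ν x)
    (hy : y ≠ 0 → B < ν y) (hxy : x + y ≠ 0) : B < ν (x + y) := by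
  rcases eq_or_ne x 0 with rfl|hx0
  · simpa using hy (by simpa using hxy)
  rcases eq_or_ne y 0 with rfl|hy0
  · simpa using hx (by simpa using hxy)
  calc B < min (ν x) (ν y) := lt_min (hx hx0) (hy hy0)
    _ ≤ ν (x + y) := hν.2 x y hx0 hy0 hxy

lemma aux_v_sum_ge (hν : IsVal ν) {ι : Type*} [DecidableEq ι] (s : Finset ι) (g : ι → K[X]) (B : ℝ) :
    (∀ i ∈ s, g i ≠ 0 → B ≤ ν (g i)) → (∑ i ∈ s, g i) ≠ 0 → B ≤ ν (∑ i ∈ s, g i) := by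
  induction s using Finset.induction_on with
  | empty => intro _ hs; simp at hs
  | insert _ _ ha ih =>
    intro hb hs
    rw [Finset.sum_insert ha] at hs ⊢
    exact aux_v_add_ge ν hν (hb _ (Finset.mem_insert_self _ _))
      (ih (fun i hi hgi => hb i (Finset.mem_insert_of_mem hi) hgi)) hs

lemma aux_v_sum_gt (hν : IsVal ν) {ι : Type*} [DecidableEq ι] (s : Finset ι) (g : ι → K[X]) (B : ℝ) :
    (∀ i ∈ s, g i ≠ 0 → B < ν (g i)) → (∑ i ∈ s, g i) ≠ 0 → B < ν (∑ i ∈ s, g i) := by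
  induction s using Finset.induction_on with
  | empty => intro _ hs; simp at hs
  | insert _ _ ha ih =>
    intro hb hs
    rw [Finset.sum_insert ha] at hs ⊢
    exact aux_v_add_gt ν hν (hb _ (Finset.mem_insert_self _ _))
      (ih (fun i hi hgi => hb i (Finset.mem_insert_of_mem hi) hgi)) hs

lemma aux_v_pow (hν : IsVal ν) (x : K[X]) (hx : x ≠ 0) (n : ℕ) : ν (x ^ n) = n * ν x := by
  induction n with
  | zero => simpa using aux_v_one ν hν
  | succ n ih =>
    rw [pow_succ, hν.1 _ x (pow_ne_zero _ hx) hx, ih]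
    push_cast; ring

lemma aux_v_nat (hν : IsVal ν) : ∀ (n : ℕ), (n : K[X]) ≠ 0 → 0 ≤ ν (n : K[X]) := by
  intro n
  induction n with
  | zero => simp
  | succ n ih =>
    intro hn1
    push_cast at hn1 ⊢
    rcases eq_or_ne (n : K[X]) 0 with h0|h0
    · rw [h0, zero_add, aux_v_one ν hν]
    · have := hν.2 _ 1 h0 one_ne_zero hn1
      rw [aux_v_one ν hν] at this
      have h2 := ih h0
      rcases min_le_iff.1 (le_refl (min (ν (n:K[X])) 0)) with _|_ <;>
        [skip; skip] <;> linarith [le_min h2 (le_refl (0:ℝ)), this]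

end Aux

section Aux2

variable (ν : Polynomial K → ℝ)

lemma aux_hD_zero_of (f : K[X]) {b : ℕ} (h : f.natDegree < b) : hasseDeriv b f = 0 := by
  ext m
  rw [hasseDeriv_coeff, coeff_eq_zero_of_natDegree_lt (by omega)]
  simp

lemma aux_epsSet_finite (f : K[X]) :
    {r : ℝ | ∃ b : ℕ, 1 ≤ b ∧ hasseDeriv b f ≠ 0 ∧ r = (ν f - ν (hasseDeriv b f)) / b}.Finite := by
  apply Set.Finite.subset ((Set.finite_Icc 1 f.natDegree).image
    (fun b => (ν f - ν (hasseDeriv b f)) / b))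
  rintro r ⟨b, hb1, hb2, rfl⟩
  refine ⟨b, ?_, rfl⟩
  simp only [Set.mem_Icc]
  refine ⟨hb1, ?_⟩
  by_contra h
  exact hb2 (aux_hD_zero_of f (by omega))

lemma aux_eps_le (hν : IsVal ν) {f : K[X]} {b : ℕ} (hd : hasseDeriv b f ≠ 0) :
    ν f - b * eps ν f ≤ ν (hasseDeriv b f) := by
  rcases Nat.eq_zero_or_pos b with rfl|hb
  · simp [hasseDeriv_zero']
  · have hmem : (ν f - ν (hasseDeriv b f)) / b ∈
        {r : ℝ | ∃ b : ℕ, 1 ≤ b ∧ hasseDeriv b f ≠ 0 ∧ r = (ν f - ν (hasseDeriv b f)) / b} :=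
      ⟨b, hb, hd, rfl⟩
    have hle := le_csSup (aux_epsSet_finite ν f).bddAbove hmem
    have hb0 : (0:ℝ) < b := by exact_mod_cast hb
    rw [div_le_iff₀ hb0] at hle
    have : eps ν f = sSup {r : ℝ | ∃ b : ℕ, 1 ≤ b ∧ hasseDeriv b f ≠ 0 ∧
        r = (ν f - ν (hasseDeriv b f)) / b} := rfl
    rw [← this] at hle
    nlinarith

lemma aux_eps_attained {Q : K[X]} (hm : Q.Monic) (hd : 0 < Q.natDegree) :
    ∃ b : ℕ, 1 ≤ b ∧ hasseDeriv b Q ≠ 0 ∧ ν (hasseDeriv b Q) = ν Q - b * eps ν Q := by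
  have hne0 : hasseDeriv Q.natDegree Q ≠ 0 := by
    intro h
    have : (hasseDeriv Q.natDegree Q).coeff 0 = 1 := by
      rw [hasseDeriv_coeff]
      simp [hm.coeff_natDegree]
    rw [h] at this
    simp at this
  have hne : {r : ℝ | ∃ b : ℕ, 1 ≤ b ∧ hasseDeriv b Q ≠ 0 ∧
      r = (ν Q - ν (hasseDeriv b Q)) / b}.Nonempty :=
    ⟨_, Q.natDegree, hd, hne0, rfl⟩
  obtain ⟨b, hb1, hb2, hb3⟩ := hne.csSup_mem (aux_epsSet_finite ν Q)
  refine ⟨b, hb1, hb2, ?_⟩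
  have hb0 : (0:ℝ) < b := by exact_mod_cast hb1
  have : eps ν Q = (ν Q - ν (hasseDeriv b Q)) / b := hb3
  rw [this]
  field_simp
  ring

end Aux2

section Aux3

lemma aux_deg_zero_lt {Q : K[X]} (hQ : Q ≠ 0) : (0:K[X]).degree < Q.degree := by
  rw [degree_zero]
  exact bot_lt_iff_ne_bot.2 (by simpa [degree_eq_bot] using hQ)

lemma aux_degree_C_mul_le (a : K) (p : K[X]) : (C a * p).degree ≤ p.degree := by
  rcases eq_or_ne a 0 with rfl|h
  · simp
  · rw [degree_mul, degree_C h, zero_add]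

lemma aux_degree_lt {p q : K[X]} (h : p.natDegree < q.natDegree) (hq : q ≠ 0) :
    p.degree < q.degree := by
  rcases eq_or_ne p 0 with rfl|hp
  · rw [degree_zero]
    exact bot_lt_iff_ne_bot.2 (by simpa [degree_eq_bot] using hq)
  · exact degree_lt_degree h

lemma aux_qc_zero (Q : K[X]) : ∀ i, qc Q (0:K[X]) i = 0 := by
  intro i
  induction i with
  | zero => simp [qc]
  | succ i ih => rw [qc, zero_divByMonic]; exact ih

lemma aux_qc_degree {Q : K[X]} (hQ : Q.Monic) (f : K[X]) : ∀ i, (qc Q f i).degree < Q.degree := by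
  intro i
  induction i generalizing f with
  | zero => exact degree_modByMonic_lt f hQ
  | succ i ih => exact ih _

lemma aux_qc_natDegree {Q : K[X]} (hQ : Q.Monic) (hd : 0 < Q.natDegree) (f : K[X]) (i : ℕ) :
    (qc Q f i).natDegree < Q.natDegree := by
  rcases eq_or_ne (qc Q f i) 0 with h|h
  · simpa [h] using hd
  · exact natDegree_lt_natDegree h (aux_qc_degree hQ f i)

lemma aux_add_divByMonic {Q : K[X]} (hQ : Q.Monic) (f g : K[X]) :
    (f + g) /ₘ Q = f /ₘ Q + g /ₘ Q := by
  have h2 := div_modByMonic_unique (f := f + g) (f /ₘ Q + g /ₘ Q) (f %ₘ Q + g %ₘ Q) hQ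
    ⟨by linear_combination (modByMonic_add_div f Q) + (modByMonic_add_div g Q),
     lt_of_le_of_lt (degree_add_le _ _)
       (max_lt (degree_modByMonic_lt f hQ) (degree_modByMonic_lt g hQ))⟩
  exact h2.1

lemma aux_qc_add {Q : K[X]} (hQ : Q.Monic) : ∀ (i : ℕ) (f g : K[X]),
    qc Q (f + g) i = qc Q f i + qc Q g i := by
  intro i
  induction i with
  | zero => intro f g; exact add_modByMonic f g
  | succ i ih =>
    intro f g
    show qc Q ((f + g) /ₘ Q) i = _
    rw [aux_add_divByMonic hQ]
    exact ih _ _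

lemma aux_C_mul_divByMonic {Q : K[X]} (hQ : Q.Monic) (a : K) (f : K[X]) :
    (C a * f) /ₘ Q = C a * (f /ₘ Q) := by
  have h2 := div_modByMonic_unique (f := C a * f) (C a * (f /ₘ Q)) (C a * (f %ₘ Q)) hQ
    ⟨by linear_combination (C a) * (modByMonic_add_div f Q),
     lt_of_le_of_lt (aux_degree_C_mul_le a _) (degree_modByMonic_lt f hQ)⟩
  exact h2.1

lemma aux_C_mul_modByMonic (Q : K[X]) (a : K) (f : K[X]) :
    (C a * f) %ₘ Q = C a * (f %ₘ Q) := by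
  simpa [smul_eq_C_mul] using smul_modByMonic (q := Q) a f

lemma aux_qc_C_mul {Q : K[X]} (hQ : Q.Monic) (a : K) : ∀ (i : ℕ) (f : K[X]),
    qc Q (C a * f) i = C a * qc Q f i := by
  intro i
  induction i with
  | zero => intro f; exact aux_C_mul_modByMonic Q a f
  | succ i ih =>
    intro f
    show qc Q ((C a * f) /ₘ Q) i = _
    rw [aux_C_mul_divByMonic hQ]
    exact ih _

lemma aux_mul_self_div {Q : K[X]} (hQ : Q.Monic) (u : K[X]) :
    (u * Q) /ₘ Q = u ∧ (u * Q) %ₘ Q = 0 := by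
  have := div_modByMonic_unique (f := u * Q) u 0 hQ ⟨by ring, aux_deg_zero_lt hQ.ne_zero⟩
  exact ⟨this.1, this.2⟩

lemma aux_qc_mul_pow {Q : K[X]} (hQ : Q.Monic) : ∀ (k : ℕ) (u : K[X]) (t : ℕ),
    qc Q (u * Q ^ k) t = if k ≤ t then qc Q u (t - k) else 0 := by
  intro k
  induction k with
  | zero => intro u t; simp
  | succ k ih =>
    intro u t
    have h1 : u * Q ^ (k+1) = (u * Q ^ k) * Q := by ring
    cases t with
    | zero =>
      show (u * Q ^ (k+1)) %ₘ Q = _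
      rw [h1, (aux_mul_self_div hQ _).2]
      simp
    | succ t =>
      show qc Q ((u * Q ^ (k+1)) /ₘ Q) t = _
      rw [h1, (aux_mul_self_div hQ _).1, ih u t]
      have : k + 1 ≤ t + 1 ↔ k ≤ t := by omega
      rcases le_or_gt k t with h|h
      · rw [if_pos h, if_pos (by omega), Nat.succ_sub_succ]
      · rw [if_neg (by omega), if_neg (by omega)]

lemma aux_qc_ne {Q : K[X]} (hQ : Q.Monic) : ∀ (i : ℕ) (f : K[X]), qc Q f i ≠ 0 →
    f ≠ 0 ∧ i * Q.natDegree ≤ f.natDegree := by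
  intro i
  induction i with
  | zero =>
    intro f h
    exact ⟨fun h0 => h (by rw [h0]; exact aux_qc_zero Q 0), by simp⟩
  | succ i ih =>
    intro f h
    obtain ⟨h1, h2⟩ := ih (f /ₘ Q) h
    have h3 : ¬ f.degree < Q.degree := fun hc => h1 ((divByMonic_eq_zero_iff hQ).2 hc)
    have hf : f ≠ 0 := by
      rintro rfl
      exact h3 (aux_deg_zero_lt hQ.ne_zero)
    have h4 : Q.natDegree ≤ f.natDegree := natDegree_le_natDegree (le_of_not_gt h3)
    have h5 : (f /ₘ Q).natDegree = f.natDegree - Q.natDegree := natDegree_divByMonic f hQ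
    refine ⟨hf, ?_⟩
    rw [h5] at h2
    rw [Nat.succ_mul]
    omega

lemma aux_qc_expansion {Q : K[X]} (hQ : Q.Monic) (hd : 0 < Q.natDegree) :
    ∀ (N : ℕ) (f : K[X]), f.natDegree < N * Q.natDegree →
    f = ∑ t ∈ Finset.range N, qc Q f t * Q ^ t := by
  intro N
  induction N with
  | zero =>
    intro f h
    rw [zero_mul] at h
    exact absurd h (Nat.not_lt_zero _)
  | succ N ih =>
    intro f h
    rcases eq_or_ne f 0 with rfl|hf
    · exact (Finset.sum_eq_zero (fun t _ => by rw [aux_qc_zero Q t, zero_mul])).symm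
    rcases Nat.eq_zero_or_pos N with rfl|hN
    · have hdeg : f.degree < Q.degree := by
        apply aux_degree_lt _ hQ.ne_zero
        omega
      rw [Finset.sum_range_succ, Finset.sum_range_zero, zero_add, pow_zero, mul_one]
      show f = f %ₘ Q
      exact ((modByMonic_eq_self_iff hQ).2 hdeg).symm
    · have h5 : (f /ₘ Q).natDegree = f.natDegree - Q.natDegree := natDegree_divByMonic f hQ
      rw [Nat.succ_mul] at h
      have h6 : (f /ₘ Q).natDegree < N * Q.natDegree := by
        have h8 : Q.natDegree ≤ N * Q.natDegree := Nat.le_mul_of_pos_left _ hN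
        rw [h5]
        omega
      have ihh := ih (f /ₘ Q) h6
      rw [Finset.sum_range_succ' (fun t => qc Q f t * Q ^ t) N]
      have hterm : ∀ t, qc Q f (t+1) * Q ^ (t+1) = Q * (qc Q (f /ₘ Q) t * Q ^ t) := by
        intro t
        show qc Q (f /ₘ Q) t * Q ^ (t+1) = _
        ring
      calc f = f %ₘ Q + Q * (f /ₘ Q) := (modByMonic_add_div f Q).symm
        _ = f %ₘ Q + Q * (∑ t ∈ Finset.range N, qc Q (f /ₘ Q) t * Q ^ t) := by rw [← ihh]
        _ = (∑ t ∈ Finset.range N, qc Q f (t+1) * Q ^ (t+1)) + qc Q f 0 * Q ^ 0 := by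
            rw [Finset.mul_sum]
            simp only [hterm]
            show _ = _ + (f %ₘ Q) * Q ^ 0
            ring

lemma aux_qc_unique {Q : K[X]} (hQ : Q.Monic) : ∀ (N : ℕ) (w : ℕ → K[X]),
    (∀ t, (w t).degree < Q.degree) →
    ∀ s, qc Q (∑ t ∈ Finset.range N, w t * Q ^ t) s = if s < N then w s else 0 := by
  intro N
  induction N with
  | zero => intro w hw s; simp [aux_qc_zero]
  | succ N ih =>
    intro w hw s
    have hv2 : w 0 + Q * (∑ t ∈ Finset.range N, w (t+1) * Q ^ t) =
        ∑ t ∈ Finset.range (N+1), w t * Q ^ t := by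
      rw [Finset.sum_range_succ' (fun t => w t * Q ^ t) N, Finset.mul_sum]
      have hterm : ∀ t, Q * (w (t+1) * Q ^ t) = w (t+1) * Q ^ (t+1) := fun t => by ring
      simp only [hterm]
      ring
    have hu := div_modByMonic_unique (f := ∑ t ∈ Finset.range (N+1), w t * Q ^ t)
      (∑ t ∈ Finset.range N, w (t+1) * Q ^ t) (w 0) hQ ⟨hv2, hw 0⟩
    cases s with
    | zero =>
      show (∑ t ∈ Finset.range (N+1), w t * Q ^ t) %ₘ Q = _
      rw [hu.2]
      simp
    | succ s =>
      show qc Q ((∑ t ∈ Finset.range (N+1), w t * Q ^ t) /ₘ Q) s = _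
      rw [hu.1, ih (fun t => w (t+1)) (fun t => hw (t+1)) s]
      have : s < N ↔ s + 1 < N + 1 := by omega
      rcases lt_or_ge s N with h|h
      · rw [if_pos h, if_pos (by omega)]
      · rw [if_neg (by omega), if_neg (by omega)]

end Aux3

section Aux4

variable (ν : Polynomial K → ℝ)

lemma aux_nuA_eq (Q f : K[X]) :
    {r : ℝ | ∃ i, qc Q f i ≠ 0 ∧ r = ν (qc Q f i * Q ^ i)} =
      (fun i => ν (qc Q f i * Q ^ i)) '' {i | qc Q f i ≠ 0} := by
  ext r
  constructor
  · rintro ⟨i, h1, h2⟩; exact ⟨i, h1, h2.symm⟩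
  · rintro ⟨i, h1, h2⟩; exact ⟨i, h1, h2.symm⟩

lemma aux_nu_finite {Q : K[X]} (hQ : Q.Monic) (hd : 0 < Q.natDegree) (f : K[X]) :
    {r : ℝ | ∃ i, qc Q f i ≠ 0 ∧ r = ν (qc Q f i * Q ^ i)}.Finite := by
  rw [aux_nuA_eq]
  apply Set.Finite.image
  apply Set.Finite.subset (Set.finite_Iic f.natDegree)
  intro i hi
  obtain ⟨hf, h2⟩ := aux_qc_ne hQ i f hi
  simp only [Set.mem_Iic]
  have h3 : i * 1 ≤ i * Q.natDegree := Nat.mul_le_mul_left i hd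
  omega

lemma aux_nuQ_le {Q : K[X]} (hQ : Q.Monic) (hd : 0 < Q.natDegree) (f : K[X]) {i : ℕ}
    (hi : qc Q f i ≠ 0) : nuQ ν Q f ≤ ν (qc Q f i * Q ^ i) :=
  csInf_le (aux_nu_finite ν hQ hd f).bddBelow ⟨i, hi, rfl⟩

lemma aux_SQ_nonempty {Q : K[X]} (hQ : Q.Monic) (hd : 0 < Q.natDegree) {f : K[X]} (hf : f ≠ 0) :
    (SQ ν Q f).Nonempty := by
  have hA : {r : ℝ | ∃ i, qc Q f i ≠ 0 ∧ r = ν (qc Q f i * Q ^ i)}.Nonempty := by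
    by_contra hA
    rw [Set.not_nonempty_iff_eq_empty] at hA
    have hall : ∀ i, qc Q f i = 0 := by
      intro i
      by_contra hi
      have hmem : ν (qc Q f i * Q ^ i) ∈
          {r : ℝ | ∃ i, qc Q f i ≠ 0 ∧ r = ν (qc Q f i * Q ^ i)} := ⟨i, hi, rfl⟩
      rw [hA] at hmem
      exact hmem
    have hexp := aux_qc_expansion hQ hd (f.natDegree + 1) f
      (by have := Nat.mul_le_mul_left (f.natDegree + 1) hd; omega)
    apply hf
    rw [hexp]
    exact Finset.sum_eq_zero (fun t _ => by rw [hall t, zero_mul])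
  obtain ⟨i, h1, h2⟩ := hA.csInf_mem (aux_nu_finite ν hQ hd f)
  exact ⟨i, h1, h2.symm⟩

lemma aux_SQ_mem {Q : K[X]} (hQ : Q.Monic) (hd : 0 < Q.natDegree) {f : K[X]} {i : ℕ}
    (hi : i ∈ SQ ν Q f) : qc Q f i ≠ 0 ∧ ν (qc Q f i * Q ^ i) = nuQ ν Q f := hi

lemma aux_delta_mem {Q : K[X]} (hQ : Q.Monic) (hd : 0 < Q.natDegree) {f : K[X]} (hf : f ≠ 0) :
    deltaQ ν Q f ∈ SQ ν Q f := by
  apply Nat.sSup_mem (aux_SQ_nonempty ν hQ hd hf)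
  refine ⟨f.natDegree, fun i hi => ?_⟩
  obtain ⟨h1, h2⟩ := hi
  obtain ⟨hf0, h3⟩ := aux_qc_ne hQ i f h1
  have h4 : i * 1 ≤ i * Q.natDegree := Nat.mul_le_mul_left i hd
  omega

end Aux4

section Aux5

variable (ν : Polynomial K → ℝ)

/-- Key lemma: for a key polynomial `Q` and `a, b` of degree `< deg Q`, both digits of the
`Q`-expansion of `a*b` have value at least `ν a + ν b`. -/
lemma aux_key_mul (hν : IsVal ν) {Q : K[X]} (hQ : IsKeyPol ν Q) {a b : K[X]} (ha : a ≠ 0)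
    (hb : b ≠ 0) (hda : a.natDegree < Q.natDegree) (hdb : b.natDegree < Q.natDegree) :
    ((a*b) %ₘ Q ≠ 0 → ν a + ν b ≤ ν ((a*b) %ₘ Q)) ∧
    ((a*b) /ₘ Q ≠ 0 → ν a + ν b ≤ ν ((a*b) /ₘ Q) + ν Q) := by
  obtain ⟨hQm, hQd, hQkey⟩ := hQ
  have hQ0 : Q ≠ 0 := hQm.ne_zero
  have hab : a * b ≠ 0 := mul_ne_zero ha hb
  have hvab : ν (a*b) = ν a + ν b := hν.1 a b ha hb
  set c := (a*b) /ₘ Q with hc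
  set r := (a*b) %ₘ Q with hr
  have hsum : r + Q * c = a * b := modByMonic_add_div _ Q
  rcases eq_or_ne c 0 with hc0|hc0
  · have hre : r = a * b := by rw [hc0, mul_zero, add_zero] at hsum; exact hsum
    exact ⟨fun _ => by rw [hre, hvab], fun h => absurd hc0 h⟩
  rcases eq_or_ne r 0 with hr0|hr0
  · have hqe : Q * c = a * b := by rw [hr0, zero_add] at hsum; exact hsum
    have h2 : ν Q + ν c = ν (a*b) := by rw [← hqe]; exact (hν.1 Q c hQ0 hc0).symm
    exact ⟨fun h => absurd hr0 h, fun _ => by rw [hvab] at h2; linarith⟩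
  by_contra hcon
  rw [not_and_or] at hcon
  have hcon' : ν r < ν a + ν b ∨ ν c + ν Q < ν a + ν b := by
    rcases hcon with h|h
    · left; push_neg at h; exact h.2
    · right; push_neg at h; exact h.2
  have hQc0 : Q * c ≠ 0 := mul_ne_zero hQ0 hc0
  have hvQc : ν (Q * c) = ν Q + ν c := hν.1 _ _ hQ0 hc0
  -- both digit terms have the same value m = ν r = ν Q + ν c, and m < ν a + ν b
  have heq : ν r = ν Q + ν c := by
    by_contra hne
    rcases lt_or_gt_of_ne hne with hlt|hgt
    · have h3 := aux_v_add_eq ν hν hr0 (Or.inr ⟨hQc0, by rw [hvQc]; exact hlt⟩)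
      have h2 : ν (a*b) = ν r := by rw [← hsum]; exact h3.2
      rcases hcon' with h|h
      · rw [hvab] at h2; linarith
      · rw [hvab] at h2; linarith
    · have h3 := aux_v_add_eq ν hν hQc0 (Or.inr ⟨hr0, by rw [hvQc]; exact hgt⟩)
      have h2 : ν (a*b) = ν (Q*c) := by rw [← hsum, add_comm]; exact h3.2
      rw [hvab, hvQc] at h2
      rcases hcon' with h|h
      · linarith
      · linarith
  have hm : ν r < ν a + ν b := by
    rcases hcon' with h|h
    · exact h
    · rw [heq]; linarith
  -- degrees
  have hndab : (a*b).natDegree = a.natDegree + b.natDegree := natDegree_mul ha hb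
  have hndc : c.natDegree < Q.natDegree := by
    rw [hc, natDegree_divByMonic _ hQm]
    omega
  have hndr : r.natDegree < Q.natDegree := natDegree_lt_natDegree hr0 (degree_modByMonic_lt _ hQm)
  -- eps facts
  obtain ⟨s, hs1, hsne, hsv⟩ := aux_eps_attained ν hQm hQd
  have hεa := hQkey a ha hda
  have hεb := hQkey b hb hdb
  have hεc := hQkey c hc0 hndc
  have hεr := hQkey r hr0 hndr
  set V : ℝ := ν r - s * eps ν Q with hV
  have hs0 : (1:ℝ) ≤ (s:ℝ) := by exact_mod_cast hs1
  -- expansion via r + Q*c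
  have hL : hasseDeriv s (a*b) = hasseDeriv s r +
      (∑ ij ∈ (Finset.HasAntidiagonal.antidiagonal s).erase (s, 0), hasseDeriv ij.1 Q * hasseDeriv ij.2 c
        + hasseDeriv s Q * hasseDeriv 0 c) := by
    rw [← hsum, map_add, hasseDeriv_mul s Q c,
      ← Finset.sum_erase_add _ _ (by simp : ((s, 0) : ℕ×ℕ) ∈ Finset.HasAntidiagonal.antidiagonal s)]
  have hX : ν (hasseDeriv s Q * hasseDeriv 0 c) = V := by
    rw [hasseDeriv_zero', hν.1 _ _ hsne hc0, hsv, hV, heq]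
    ring
  have hX0 : hasseDeriv s Q * hasseDeriv 0 c ≠ 0 := by
    rw [hasseDeriv_zero']
    exact mul_ne_zero hsne hc0
  -- every other term in the r + Qc expansion has value > V
  have hrestQc : ∀ ij ∈ (Finset.HasAntidiagonal.antidiagonal s).erase (s, 0),
      hasseDeriv ij.1 Q * hasseDeriv ij.2 c ≠ 0 →
      V < ν (hasseDeriv ij.1 Q * hasseDeriv ij.2 c) := by
    rintro ⟨i, j⟩ hij hne0
    dsimp only at hne0 ⊢
    have hij2 : i + j = s := Finset.HasAntidiagonal.mem_antidiagonal.1 (Finset.mem_of_mem_erase hij)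
    have hjne : 1 ≤ j := by
      rcases Nat.eq_zero_or_pos j with rfl|h
      · exact absurd (by omega : i = s) (by
          intro h
          exact (Finset.ne_of_mem_erase hij) (by rw [h]))
      · exact h
    obtain ⟨h1, h2⟩ := mul_ne_zero_iff.1 hne0
    have e1 : ν Q - i * eps ν Q ≤ ν (hasseDeriv i Q) := aux_eps_le ν hν h1
    have e2 : ν c - j * eps ν c ≤ ν (hasseDeriv j c) := aux_eps_le ν hν h2
    have e3 : ν (hasseDeriv i Q * hasseDeriv j c) = ν (hasseDeriv i Q) + ν (hasseDeriv j c) :=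
      hν.1 _ _ h1 h2
    have hj1 : (1:ℝ) ≤ (j:ℝ) := by exact_mod_cast hjne
    have hcast : (i:ℝ) + (j:ℝ) = (s:ℝ) := by exact_mod_cast hij2
    have hjmul : (j:ℝ) * eps ν c < (j:ℝ) * eps ν Q :=
      mul_lt_mul_of_pos_left hεc (by linarith)
    have hseps : (s:ℝ) * eps ν Q = i * eps ν Q + j * eps ν Q := by rw [← hcast]; ring
    rw [hV, heq]
    linarith [e1, e2, e3]
  have hrbound : hasseDeriv s r ≠ 0 → V < ν (hasseDeriv s r) := by
    intro h0
    have e1 : ν r - s * eps ν r ≤ ν (hasseDeriv s r) := aux_eps_le ν hν h0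
    have : (s:ℝ) * eps ν r < (s:ℝ) * eps ν Q := mul_lt_mul_of_pos_left hεr (by linarith)
    rw [hV]
    linarith
  -- hence ν (∂ₛ (ab)) = V and it is nonzero
  have hYbound : hasseDeriv s r + ∑ ij ∈ (Finset.HasAntidiagonal.antidiagonal s).erase (s, 0),
      hasseDeriv ij.1 Q * hasseDeriv ij.2 c ≠ 0 →
      V < ν (hasseDeriv s r + ∑ ij ∈ (Finset.HasAntidiagonal.antidiagonal s).erase (s, 0),
        hasseDeriv ij.1 Q * hasseDeriv ij.2 c) := by
    intro h0
    exact aux_v_add_gt ν hν hrbound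
      (aux_v_sum_gt ν hν _ _ V hrestQc) h0
  have hLHS : hasseDeriv s (a*b) ≠ 0 ∧ ν (hasseDeriv s (a*b)) = V := by
    have harr : hasseDeriv s (a*b) = hasseDeriv s Q * hasseDeriv 0 c +
        (hasseDeriv s r + ∑ ij ∈ (Finset.HasAntidiagonal.antidiagonal s).erase (s, 0),
          hasseDeriv ij.1 Q * hasseDeriv ij.2 c) := by
      rw [hL]; ring
    rw [harr]
    have := aux_v_add_eq ν hν hX0 (by
      rcases eq_or_ne (hasseDeriv s r + ∑ ij ∈ (Finset.HasAntidiagonal.antidiagonal s).erase (s, 0),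
          hasseDeriv ij.1 Q * hasseDeriv ij.2 c) 0 with h0|h0
      · exact Or.inl h0
      · exact Or.inr ⟨h0, by rw [hX]; exact hYbound h0⟩)
    exact ⟨this.1, by rw [this.2, hX]⟩
  -- expansion via a * b : every term has value > V
  have hprod : V < ν (hasseDeriv s (a*b)) := by
    rw [hasseDeriv_mul s a b]
    apply aux_v_sum_gt ν hν _ _ V _ (by rw [← hasseDeriv_mul s a b]; exact hLHS.1)
    rintro ⟨i, j⟩ hij hne0
    dsimp only at hne0 ⊢
    have hij2 : i + j = s := Finset.HasAntidiagonal.mem_antidiagonal.1 hij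
    obtain ⟨h1, h2⟩ := mul_ne_zero_iff.1 hne0
    have e1 : ν a - i * eps ν a ≤ ν (hasseDeriv i a) := aux_eps_le ν hν h1
    have e2 : ν b - j * eps ν b ≤ ν (hasseDeriv j b) := aux_eps_le ν hν h2
    have e3 : ν (hasseDeriv i a * hasseDeriv j b) = ν (hasseDeriv i a) + ν (hasseDeriv j b) :=
      hν.1 _ _ h1 h2
    have hcast : (i:ℝ) + (j:ℝ) = (s:ℝ) := by exact_mod_cast hij2
    have hi0 : (0:ℝ) ≤ (i:ℝ) := by positivity
    have hj0 : (0:ℝ) ≤ (j:ℝ) := by positivity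
    have hia : (i:ℝ) * eps ν a ≤ (i:ℝ) * eps ν Q := mul_le_mul_of_nonneg_left hεa.le hi0
    have hjb : (j:ℝ) * eps ν b ≤ (j:ℝ) * eps ν Q := mul_le_mul_of_nonneg_left hεb.le hj0
    have hseps : (s:ℝ) * eps ν Q = i * eps ν Q + j * eps ν Q := by rw [← hcast]; ring
    rw [hV]
    linarith [e1, e2, e3]
  rw [hLHS.2] at hprod
  exact lt_irrefl _ hprod

end Aux5

section Aux6

variable (ν : Polynomial K → ℝ)

/-- Division of a product of two small-degree polynomials by `Q₂` : the remainder has value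
`≥ ν a + ν b` and the quotient has value `≥ ν a + ν b - ν Q₁`. -/
lemma aux_key_mul2 (hν : IsVal ν) {Q₁ Q₂ : K[X]} (hQ₁ : IsKeyPol ν Q₁) (hQ₂m : Q₂.Monic)
    (hdeg : Q₁.natDegree = Q₂.natDegree) (hh0 : Q₂ - Q₁ ≠ 0)
    (hdh : (Q₂ - Q₁).natDegree < Q₂.natDegree) (hvh : ν Q₁ ≤ ν (Q₂ - Q₁)) :
    ∀ (n : ℕ) (a b : K[X]), a ≠ 0 → b ≠ 0 → a.natDegree < Q₂.natDegree →
      b.natDegree < Q₂.natDegree → a.natDegree + b.natDegree ≤ n →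
    ((a*b) %ₘ Q₂ ≠ 0 → ν a + ν b ≤ ν ((a*b) %ₘ Q₂)) ∧
    ((a*b) /ₘ Q₂ ≠ 0 → ν a + ν b ≤ ν ((a*b) /ₘ Q₂) + ν Q₁) := by
  have hQ₁m : Q₁.Monic := hQ₁.1
  have hdegQ : Q₁.degree = Q₂.degree := by
    rw [degree_eq_natDegree hQ₁m.ne_zero, degree_eq_natDegree hQ₂m.ne_zero, hdeg]
  intro n
  induction n using Nat.strong_induction_on with
  | _ n ih =>
    intro a b ha hb hda hdb hn
    have hab : a * b ≠ 0 := mul_ne_zero ha hb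
    have hvab : ν (a*b) = ν a + ν b := hν.1 a b ha hb
    have hndab : (a*b).natDegree = a.natDegree + b.natDegree := natDegree_mul ha hb
    rcases lt_or_ge (a*b).natDegree Q₂.natDegree with hsmall|hbig
    · have hdm : (a*b).degree < Q₂.degree := aux_degree_lt hsmall hQ₂m.ne_zero
      refine ⟨fun _ => ?_, fun hne => absurd ((divByMonic_eq_zero_iff hQ₂m).2 hdm) hne⟩
      rw [(modByMonic_eq_self_iff hQ₂m).2 hdm, hvab]
    · set c' := (a*b) /ₘ Q₁ with hc'
      set r' := (a*b) %ₘ Q₁ with hr'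
      have hs1 : r' + Q₁ * c' = a * b := modByMonic_add_div _ Q₁
      have key1 := aux_key_mul ν hν hQ₁ ha hb (hdeg ▸ hda) (hdeg ▸ hdb)
      have hc'0 : c' ≠ 0 := by
        intro h0
        rw [h0, mul_zero, add_zero] at hs1
        have : (a*b).degree < Q₁.degree := hs1 ▸ degree_modByMonic_lt _ hQ₁m
        rw [hdegQ] at this
        have := natDegree_lt_natDegree hab this
        omega
      have hvc' : ν a + ν b ≤ ν c' + ν Q₁ := key1.2 hc'0
      have hndc' : c'.natDegree < Q₂.natDegree := by
        rw [hc', natDegree_divByMonic _ hQ₁m]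
        omega
      set γ := (c' * (Q₂ - Q₁)) /ₘ Q₂ with hγ
      set ρ := (c' * (Q₂ - Q₁)) %ₘ Q₂ with hρ
      have hs2 : ρ + Q₂ * γ = c' * (Q₂ - Q₁) := modByMonic_add_div _ Q₂
      have hrec : c'.natDegree + (Q₂ - Q₁).natDegree < n := by
        have h1 : c'.natDegree = a.natDegree + b.natDegree - Q₁.natDegree := by
          rw [hc', natDegree_divByMonic _ hQ₁m, hndab]
        have hQ₁d : 0 < Q₁.natDegree := hQ₁.2.1
        omega
      have IH := ih _ hrec c' (Q₂ - Q₁) hc'0 hh0 hndc' hdh (le_refl _)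
      have hvρ : ρ ≠ 0 → ν a + ν b ≤ ν ρ := by
        intro h0
        calc ν a + ν b ≤ ν c' + ν Q₁ := hvc'
          _ ≤ ν c' + ν (Q₂ - Q₁) := by linarith
          _ ≤ ν ρ := IH.1 h0
      have hvγ : γ ≠ 0 → ν a + ν b - ν Q₁ ≤ ν γ := by
        intro h0
        have := IH.2 h0
        have h2 : ν c' + ν (Q₂ - Q₁) ≤ ν γ + ν Q₁ := this
        linarith
      have huniq := div_modByMonic_unique (f := a*b) (c' - γ) (r' - ρ) hQ₂m
        ⟨by linear_combination hs1 - hs2,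
         lt_of_le_of_lt (degree_sub_le _ _)
           (max_lt (hdegQ ▸ degree_modByMonic_lt _ hQ₁m) (degree_modByMonic_lt _ hQ₂m))⟩
      constructor
      · intro hne
        rw [huniq.2] at hne ⊢
        rw [sub_eq_add_neg] at hne ⊢
        refine aux_v_add_ge ν hν (key1.1) ?_ hne
        intro hρ0
        rw [aux_v_neg ν hν _ (neg_ne_zero.1 hρ0)]
        exact hvρ (neg_ne_zero.1 hρ0)
      · intro hne
        rw [huniq.1] at hne ⊢
        rw [sub_eq_add_neg] at hne ⊢
        have hgoal : ν a + ν b - ν Q₁ ≤ ν (c' + -γ) := by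
          refine aux_v_add_ge ν hν (fun _ => by linarith) ?_ hne
          intro hγ0
          rw [aux_v_neg ν hν _ (neg_ne_zero.1 hγ0)]
          exact hvγ (neg_ne_zero.1 hγ0)
        linarith

end Aux6

section Aux7

variable (ν : Polynomial K → ℝ)

lemma aux_div_deg_lt {Q : K[X]} (hQ : Q.Monic) (hd : 0 < Q.natDegree) {x : K[X]}
    (hx : x.natDegree < 2 * Q.natDegree) : (x /ₘ Q).degree < Q.degree := by
  rcases eq_or_ne (x /ₘ Q) 0 with h|h
  · rw [h]; exact aux_deg_zero_lt hQ.ne_zero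
  · apply aux_degree_lt _ hQ.ne_zero
    rw [natDegree_divByMonic _ hQ]
    omega

lemma aux_good_mul (hν : IsVal ν) {Q₁ Q₂ : K[X]} (hQ₁ : IsKeyPol ν Q₁) (hQ₂m : Q₂.Monic)
    (hQ₂d : 0 < Q₂.natDegree)
    (hdeg : Q₁.natDegree = Q₂.natDegree) (hh0 : Q₂ - Q₁ ≠ 0)
    (hdh : (Q₂ - Q₁).natDegree < Q₂.natDegree) (hvh : ν Q₁ ≤ ν (Q₂ - Q₁))
    {u : K[X]} (hu : u ≠ 0)
    (hgood : ∀ s, qc Q₂ u s ≠ 0 → ν u - s * ν Q₁ ≤ ν (qc Q₂ u s))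
    {a : K[X]} (ha : a ≠ 0) (hda : a.natDegree < Q₂.natDegree) :
    ∀ s, qc Q₂ (a * u) s ≠ 0 → ν (a * u) - s * ν Q₁ ≤ ν (qc Q₂ (a * u) s) := by
  set N := u.natDegree + 1 with hN
  have hexp : u = ∑ t ∈ Finset.range N, qc Q₂ u t * Q₂ ^ t :=
    aux_qc_expansion hQ₂m hQ₂d N u (by have := Nat.mul_le_mul_left N hQ₂d; omega)
  obtain ⟨w, hw0, hwsucc⟩ : ∃ w : ℕ → K[X], (w 0 = (a * qc Q₂ u 0) %ₘ Q₂) ∧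
      (∀ t, w (t+1) = (a * qc Q₂ u (t+1)) %ₘ Q₂ + (a * qc Q₂ u t) /ₘ Q₂) :=
    ⟨fun t => match t with
      | 0 => (a * qc Q₂ u 0) %ₘ Q₂
      | (t+1) => (a * qc Q₂ u (t+1)) %ₘ Q₂ + (a * qc Q₂ u t) /ₘ Q₂, rfl, fun t => rfl⟩
  have hqcN : qc Q₂ u N = 0 := by
    by_contra hqc
    have := (aux_qc_ne hQ₂m N u hqc).2
    have h2 := Nat.mul_le_mul_left N hQ₂d
    omega
  have hwdeg : ∀ t, (w t).degree < Q₂.degree := by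
    intro t
    cases t with
    | zero => rw [hw0]; exact degree_modByMonic_lt _ hQ₂m
    | succ t =>
      rw [hwsucc t]
      apply lt_of_le_of_lt (degree_add_le _ _)
      apply max_lt (degree_modByMonic_lt _ hQ₂m)
      apply aux_div_deg_lt hQ₂m hQ₂d
      have h1 := aux_qc_natDegree hQ₂m hQ₂d u t
      have h2 := natDegree_mul_le (p := a) (q := qc Q₂ u t)
      omega
  have hsum : ∑ t ∈ Finset.range (N+1), w t * Q₂ ^ t = a * u := by
    have step1 : ∑ t ∈ Finset.range (N+1), w t * Q₂ ^ t
        = (∑ t ∈ Finset.range N, ((a * qc Q₂ u (t+1)) %ₘ Q₂ * Q₂ ^ (t+1)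
            + (a * qc Q₂ u t) /ₘ Q₂ * Q₂ ^ t * Q₂))
          + (a * qc Q₂ u 0) %ₘ Q₂ * Q₂ ^ 0 := by
      rw [Finset.sum_range_succ' (fun t => w t * Q₂ ^ t) N, hw0]
      congr 1
      refine Finset.sum_congr rfl (fun t _ => ?_)
      rw [hwsucc t]; ring
    have e2 : (∑ t ∈ Finset.range N, (a * qc Q₂ u (t+1)) %ₘ Q₂ * Q₂ ^ (t+1))
        + (a * qc Q₂ u 0) %ₘ Q₂ * Q₂ ^ 0
        = ∑ t ∈ Finset.range N, (a * qc Q₂ u t) %ₘ Q₂ * Q₂ ^ t := by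
      rw [← Finset.sum_range_succ' (fun t => (a * qc Q₂ u t) %ₘ Q₂ * Q₂ ^ t) N,
        Finset.sum_range_succ, hqcN, mul_zero, zero_modByMonic, zero_mul, add_zero]
    have e4 : ∑ t ∈ Finset.range N, ((a * qc Q₂ u t) %ₘ Q₂ * Q₂ ^ t
        + (a * qc Q₂ u t) /ₘ Q₂ * Q₂ ^ t * Q₂) = a * u := by
      have e4' : ∀ t ∈ Finset.range N, (a * qc Q₂ u t) %ₘ Q₂ * Q₂ ^ t
          + (a * qc Q₂ u t) /ₘ Q₂ * Q₂ ^ t * Q₂ = a * (qc Q₂ u t * Q₂ ^ t) := by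
        intro t _
        have hmd := modByMonic_add_div (a * qc Q₂ u t) Q₂
        linear_combination Q₂ ^ t * hmd
      rw [Finset.sum_congr rfl e4', ← Finset.mul_sum, ← hexp]
    have e5 : ∑ t ∈ Finset.range N, ((a * qc Q₂ u t) %ₘ Q₂ * Q₂ ^ t
        + (a * qc Q₂ u t) /ₘ Q₂ * Q₂ ^ t * Q₂)
        = (∑ t ∈ Finset.range N, (a * qc Q₂ u t) %ₘ Q₂ * Q₂ ^ t)
          + ∑ t ∈ Finset.range N, (a * qc Q₂ u t) /ₘ Q₂ * Q₂ ^ t * Q₂ :=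
      Finset.sum_add_distrib
    rw [step1, Finset.sum_add_distrib]
    linear_combination e2 + e4 - e5
  have hqc_eq : ∀ s, qc Q₂ (a * u) s = if s < N+1 then w s else 0 := by
    intro s
    rw [← hsum]
    exact aux_qc_unique hQ₂m (N+1) w hwdeg s
  intro s hs
  have hsN : s < N + 1 := by
    by_contra hsN
    rw [hqc_eq s, if_neg hsN] at hs
    exact hs rfl
  rw [hqc_eq s, if_pos hsN] at hs ⊢
  have hvau : ν (a * u) = ν a + ν u := hν.1 a u ha hu
  have hbmod : ∀ t : ℕ, (a * qc Q₂ u t) %ₘ Q₂ ≠ 0 →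
      ν (a * u) - (t:ℝ) * ν Q₁ ≤ ν ((a * qc Q₂ u t) %ₘ Q₂) := by
    intro t h0
    have haqc : a * qc Q₂ u t ≠ 0 := fun hz => h0 (by rw [hz, zero_modByMonic])
    have hqs : qc Q₂ u t ≠ 0 := fun hz => haqc (by rw [hz, mul_zero])
    have hk := (aux_key_mul2 ν hν hQ₁ hQ₂m hdeg hh0 hdh hvh
      (a.natDegree + (qc Q₂ u t).natDegree) a (qc Q₂ u t) ha hqs hda
      (aux_qc_natDegree hQ₂m hQ₂d u t) (le_refl _)).1 h0
    have h2 := hgood t hqs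
    rw [hvau]
    linarith
  have hbdiv : ∀ t : ℕ, (a * qc Q₂ u t) /ₘ Q₂ ≠ 0 →
      ν (a * u) - ((t:ℝ) + 1) * ν Q₁ ≤ ν ((a * qc Q₂ u t) /ₘ Q₂) := by
    intro t h0
    have haqc : a * qc Q₂ u t ≠ 0 := fun hz => h0 (by rw [hz, zero_divByMonic])
    have hqs : qc Q₂ u t ≠ 0 := fun hz => haqc (by rw [hz, mul_zero])
    have hk := (aux_key_mul2 ν hν hQ₁ hQ₂m hdeg hh0 hdh hvh
      (a.natDegree + (qc Q₂ u t).natDegree) a (qc Q₂ u t) ha hqs hda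
      (aux_qc_natDegree hQ₂m hQ₂d u t) (le_refl _)).2 h0
    have h2 := hgood t hqs
    rw [hvau]
    linarith
  cases s with
  | zero =>
    rw [hw0] at hs ⊢
    simpa using hbmod 0 hs
  | succ t =>
    rw [hwsucc t] at hs ⊢
    refine aux_v_add_ge ν hν (fun h0 => ?_) (fun h0 => ?_) hs
    · simpa using hbmod (t+1) h0
    · have := hbdiv t h0
      have hc : ((t:ℝ) + 1) = ((t+1 : ℕ) : ℝ) := by push_cast; ring
      rw [hc] at this
      exact this

lemma aux_good_pow (hν : IsVal ν) {Q₁ Q₂ : K[X]} (hQ₁ : IsKeyPol ν Q₁) (hQ₂m : Q₂.Monic)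
    (hQ₂d : 0 < Q₂.natDegree)
    (hdeg : Q₁.natDegree = Q₂.natDegree) (hh0 : Q₂ - Q₁ ≠ 0)
    (hdh : (Q₂ - Q₁).natDegree < Q₂.natDegree) (hvh : ν Q₁ ≤ ν (Q₂ - Q₁)) :
    ∀ (m : ℕ) {b : K[X]}, b ≠ 0 → b.natDegree < Q₂.natDegree →
    ∀ s, qc Q₂ (b * (Q₂ - Q₁) ^ m) s ≠ 0 →
      ν (b * (Q₂ - Q₁) ^ m) - s * ν Q₁ ≤ ν (qc Q₂ (b * (Q₂ - Q₁) ^ m) s) := by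
  intro m
  induction m with
  | zero =>
    intro b hb hdb s hqc
    rw [pow_zero, mul_one] at hqc ⊢
    cases s with
    | zero =>
      have hbm : b %ₘ Q₂ = b :=
        (modByMonic_eq_self_iff hQ₂m).2 (aux_degree_lt hdb hQ₂m.ne_zero)
      show ν b - (0:ℕ) * ν Q₁ ≤ ν (qc Q₂ b 0)
      show ν b - (0:ℕ) * ν Q₁ ≤ ν (b %ₘ Q₂)
      rw [hbm]
      simp
    | succ s =>
      exfalso
      have h2 := (aux_qc_ne hQ₂m (s+1) b hqc).2
      have h3 : (s+1) * Q₂.natDegree = s * Q₂.natDegree + Q₂.natDegree := by ring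
      omega
  | succ m ih =>
    intro b hb hdb s hqc
    have harr : b * (Q₂ - Q₁) ^ (m+1) = (Q₂ - Q₁) * (b * (Q₂ - Q₁) ^ m) := by ring
    rw [harr] at hqc ⊢
    exact aux_good_mul ν hν hQ₁ hQ₂m hQ₂d hdeg hh0 hdh hvh
      (mul_ne_zero hb (pow_ne_zero _ hh0)) (ih hb hdb) hh0 hdh s hqc

end Aux7

section Aux8

variable (ν : Polynomial K → ℝ)

lemma aux_qc_sum {Q : K[X]} (hQ : Q.Monic) {ι : Type*} (s : Finset ι) (g : ι → K[X]) (i : ℕ) :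
    qc Q (∑ x ∈ s, g x) i = ∑ x ∈ s, qc Q (g x) i := by
  classical
  induction s using Finset.induction_on with
  | empty => simp [aux_qc_zero]
  | insert _ _ ha ih =>
    rw [Finset.sum_insert ha, Finset.sum_insert ha, aux_qc_add hQ, ih]

theorem nuQ_strict_mono' (hν : IsVal ν)
    (Q₁ Q₂ : Polynomial K) (hQ₁ : IsKeyPol ν Q₁) (hQ₂ : IsKeyPol ν Q₂)
    (hdeg : Q₁.natDegree = Q₂.natDegree) (hval : ν Q₁ < ν Q₂)
    (f : Polynomial K) (hf : f ≠ 0) (hδ : 0 < deltaQ ν Q₂ f) :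
    nuQ ν Q₁ f < nuQ ν Q₂ f := by
  have hQ₁m : Q₁.Monic := hQ₁.1
  have hQ₂m : Q₂.Monic := hQ₂.1
  have hQ₁d : 0 < Q₁.natDegree := hQ₁.2.1
  have hQ₂d : 0 < Q₂.natDegree := hQ₂.2.1
  have hQ₁0 : Q₁ ≠ 0 := hQ₁m.ne_zero
  have hQ₂0 : Q₂ ≠ 0 := hQ₂m.ne_zero
  have hdegQ : Q₁.degree = Q₂.degree := by
    rw [degree_eq_natDegree hQ₁0, degree_eq_natDegree hQ₂0, hdeg]
  have hh0 : Q₂ - Q₁ ≠ 0 := by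
    intro h
    rw [sub_eq_zero] at h
    rw [h] at hval
    exact lt_irrefl _ hval
  have hdh : (Q₂ - Q₁).natDegree < Q₂.natDegree := by
    exact natDegree_lt_natDegree hh0
      (degree_sub_lt hdegQ.symm hQ₂0 (by rw [hQ₁m.leadingCoeff, hQ₂m.leadingCoeff]))
  have hvh : ν Q₁ ≤ ν (Q₂ - Q₁) := by
    have h1 := hν.2 Q₂ (-Q₁) hQ₂0 (neg_ne_zero.2 hQ₁0)
      (by rw [← sub_eq_add_neg]; exact hh0)
    rw [aux_v_neg ν hν Q₁ hQ₁0, ← sub_eq_add_neg] at h1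
    calc ν Q₁ = min (ν Q₂) (ν Q₁) := (min_eq_right hval.le).symm
      _ ≤ ν (Q₂ - Q₁) := h1
  obtain ⟨hfδ, hvδ⟩ := aux_delta_mem ν hQ₂m hQ₂d hf
  set δ := deltaQ ν Q₂ f with hδdef
  set M := nuQ ν Q₂ f with hM
  set m₁ := nuQ ν Q₁ f with hm₁
  by_contra hcon
  push_neg at hcon
  -- expansion of f in powers of Q₁
  set N := f.natDegree + 1 with hN
  have hexp : f = ∑ j ∈ Finset.range N, qc Q₁ f j * Q₁ ^ j :=
    aux_qc_expansion hQ₁m hQ₁d N f (by have := Nat.mul_le_mul_left N hQ₁d; omega)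
  have hbinom : ∀ j : ℕ, Q₁ ^ j = ∑ k ∈ Finset.range (j+1),
      Q₂ ^ k * (-(Q₂ - Q₁)) ^ (j-k) * ((j.choose k : ℕ) : K[X]) := by
    intro j
    have h1 := add_pow Q₂ (-(Q₂ - Q₁)) j
    rw [show Q₂ + -(Q₂ - Q₁) = Q₁ by ring] at h1
    exact h1
  have hfexp : f = ∑ j ∈ Finset.range N, ∑ k ∈ Finset.range (j+1),
      (qc Q₁ f j * (-(Q₂ - Q₁)) ^ (j-k) * ((j.choose k : ℕ) : K[X])) * Q₂ ^ k := by
    calc f = ∑ j ∈ Finset.range N, qc Q₁ f j * Q₁ ^ j := hexp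
      _ = _ := by
        refine Finset.sum_congr rfl (fun j _ => ?_)
        rw [hbinom j, Finset.mul_sum]
        exact Finset.sum_congr rfl (fun k _ => by ring)
  have hqcf : qc Q₂ f δ = ∑ j ∈ Finset.range N, ∑ k ∈ Finset.range (j+1),
      qc Q₂ ((qc Q₁ f j * (-(Q₂ - Q₁)) ^ (j-k) * ((j.choose k : ℕ) : K[X])) * Q₂ ^ k) δ := by
    conv_lhs => rw [hfexp]
    rw [aux_qc_sum hQ₂m]
    exact Finset.sum_congr rfl (fun j _ => aux_qc_sum hQ₂m _ _ _)
  -- bound every term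
  set B : ℝ := m₁ - (δ:ℝ) * ν Q₁ with hB
  have hterm : ∀ j ∈ Finset.range N, ∀ k ∈ Finset.range (j+1),
      qc Q₂ ((qc Q₁ f j * (-(Q₂ - Q₁)) ^ (j-k) * ((j.choose k : ℕ) : K[X])) * Q₂ ^ k) δ ≠ 0 →
      B ≤ ν (qc Q₂ ((qc Q₁ f j * (-(Q₂ - Q₁)) ^ (j-k) * ((j.choose k : ℕ) : K[X])) * Q₂ ^ k) δ) := by
    intro j hj k hk hne
    have hkj : k ≤ j := by
      rw [Finset.mem_range] at hk; omega
    rw [aux_qc_mul_pow hQ₂m] at hne ⊢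
    by_cases hkδ : k ≤ δ
    swap
    · rw [if_neg hkδ] at hne; exact absurd rfl hne
    rw [if_pos hkδ] at hne ⊢
    -- rewrite the constant
    set κ : K := (-1 : K) ^ (j-k) * ((j.choose k : ℕ) : K) with hκ
    have hCC:  qc Q₁ f j * (-(Q₂ - Q₁)) ^ (j-k) * ((j.choose k : ℕ) : K[X])
        = C κ * (qc Q₁ f j * (Q₂ - Q₁) ^ (j-k)) := by
      rw [hκ, map_mul, map_pow, map_neg, map_one, C_eq_natCast]
      rw [neg_pow]
      push_cast
      ring
    rw [hCC] at hne ⊢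
    rw [aux_qc_C_mul hQ₂m] at hne ⊢
    have hκ0 : C κ ≠ 0 := fun h => hne (by rw [h, zero_mul])
    have hqw : qc Q₂ (qc Q₁ f j * (Q₂ - Q₁) ^ (j-k)) (δ - k) ≠ 0 :=
      fun h => hne (by rw [h, mul_zero])
    have hbj : qc Q₁ f j ≠ 0 := by
      intro h
      apply hqw
      rw [h, zero_mul, aux_qc_zero]
    have hw0 : qc Q₁ f j * (Q₂ - Q₁) ^ (j-k) ≠ 0 :=
      mul_ne_zero hbj (pow_ne_zero _ hh0)
    -- value of the constant
    have hn0 : ((j.choose k : ℕ) : K[X]) ≠ 0 := by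
      intro h
      apply hκ0
      have h2 : ((j.choose k : ℕ) : K) = 0 := by rwa [← C_eq_natCast, C_eq_zero] at h
      rw [hκ, h2, mul_zero, map_zero]
    have hvC : 0 ≤ ν (C κ) := by
      have e1 : (C κ : K[X]) = (-1) ^ (j-k) * ((j.choose k : ℕ) : K[X]) := by
        rw [hκ, map_mul, map_pow, map_neg, map_one, C_eq_natCast]
      rw [e1, hν.1 _ _ (pow_ne_zero _ (by norm_num)) hn0,
        aux_v_pow ν hν _ (by norm_num : (-1 : K[X]) ≠ 0), aux_v_negone ν hν]
      have := aux_v_nat ν hν (j.choose k) hn0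
      simp only [mul_zero, zero_add]
      exact this
    -- value of the digit
    have hgood := aux_good_pow ν hν hQ₁ hQ₂m hQ₂d hdeg hh0 hdh hvh (j-k) hbj
      (hdeg ▸ aux_qc_natDegree hQ₁m hQ₁d f j) (δ - k) hqw
    have hvw : ν (qc Q₁ f j * (Q₂ - Q₁) ^ (j-k))
        = ν (qc Q₁ f j) + ((j:ℝ) - (k:ℝ)) * ν (Q₂ - Q₁) := by
      rw [hν.1 _ _ hbj (pow_ne_zero _ hh0), aux_v_pow ν hν _ hh0]
      congr 1
      congr 1
      push_cast [Nat.cast_sub hkj]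
      ring
    have hvbj : m₁ ≤ ν (qc Q₁ f j) + (j:ℝ) * ν Q₁ := by
      have := aux_nuQ_le ν hQ₁m hQ₁d f hbj
      rw [hν.1 _ _ hbj (pow_ne_zero _ hQ₁0), aux_v_pow ν hν _ hQ₁0] at this
      exact this
    have hcast1 : ((δ - k : ℕ) : ℝ) = (δ:ℝ) - (k:ℝ) := by
      push_cast [Nat.cast_sub hkδ]; ring
    have hjk0 : (0:ℝ) ≤ (j:ℝ) - (k:ℝ) := by
      have : (k:ℝ) ≤ (j:ℝ) := by exact_mod_cast hkj
      linarith
    have hmono : ((j:ℝ) - (k:ℝ)) * ν Q₁ ≤ ((j:ℝ) - (k:ℝ)) * ν (Q₂ - Q₁) :=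
      mul_le_mul_of_nonneg_left hvh hjk0
    rw [hν.1 _ _ hκ0 hqw]
    rw [hcast1] at hgood
    rw [hB]
    linarith [hgood, hvw, hvbj, hvC, hmono]
  have hbound : B ≤ ν (qc Q₂ f δ) := by
    rw [hqcf]
    apply aux_v_sum_ge ν hν _ _ B
    · intro j hj hne
      exact aux_v_sum_ge ν hν _ _ B (fun k hk => hterm j hj k hk) hne
    · rw [← hqcf]; exact hfδ
  -- contradiction
  have hMv : ν (qc Q₂ f δ * Q₂ ^ δ) = ν (qc Q₂ f δ) + (δ:ℝ) * ν Q₂ := by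
    rw [hν.1 _ _ hfδ (pow_ne_zero _ hQ₂0), aux_v_pow ν hν _ hQ₂0]
  have hδ1 : (1:ℝ) ≤ (δ:ℝ) := by exact_mod_cast hδ
  have : M + (δ:ℝ) * (ν Q₂ - ν Q₁) ≤ M := by
    calc M + (δ:ℝ) * (ν Q₂ - ν Q₁) ≤ m₁ + (δ:ℝ) * (ν Q₂ - ν Q₁) := by linarith
      _ = (m₁ - (δ:ℝ) * ν Q₁) + (δ:ℝ) * ν Q₂ := by ring
      _ ≤ ν (qc Q₂ f δ) + (δ:ℝ) * ν Q₂ := by rw [← hB]; linarith [hbound]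
      _ = ν (qc Q₂ f δ * Q₂ ^ δ) := hMv.symm
      _ = M := hvδ
  nlinarith [hδ1, hval, this]

end Aux8


/-- For key polynomials of the same degree with `ν Q₁ < ν Q₂`, if `δ_{Q₂}(f) > 0`
then `ν_{Q₁}(f) < ν_{Q₂}(f)`. -/
theorem nuQ_strict_mono (ν : Polynomial K → ℝ) (hν : IsVal ν)
    (Q₁ Q₂ : Polynomial K) (hQ₁ : IsKeyPol ν Q₁) (hQ₂ : IsKeyPol ν Q₂)
    (hdeg : Q₁.natDegree = Q₂.natDegree) (hval : ν Q₁ < ν Q₂)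
    (f : Polynomial K) (hf : f ≠ 0) (hδ : 0 < deltaQ ν Q₂ f) :
    nuQ ν Q₁ f < nuQ ν Q₂ f :=
  nuQ_strict_mono' ν hν Q₁ Q₂ hQ₁ hQ₂ hdeg hval f hf hδ
end

section
/- Let Q be a key polynomial for ν with ε = ε(Q), let h be a nonzero polynomial of degree less than deg(Q), n a positive integer, and b a positive integer. For any tuple γ = (b₀, b₁, …, b_r) with 0 ≤ r ≤ n, b₀ ≥ 0, 0 < b₁ ≤ … ≤ b_r, and b₀ + … + b_r = b, set T_γ = ∂_{b₀}(h) · (∏_{i=1}^r ∂_{b_i}(Q)) · Q^{n-r}. Then ν(T_γ) ≥ ν(hQ^n) - b·ε, with equality if and only if b₀ = 0 and b_i ∈ I(Q) for all 1 ≤ i ≤ r. -/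
open Polynomial

variable {K : Type*} [Field K]

lemma val_one' (ν : Polynomial K → ℝ) (hν : IsVal ν) : ν 1 = 0 := by
  have := hν.1 1 1 one_ne_zero one_ne_zero
  simp only [mul_one] at this
  linarith

lemma val_pow' (ν : Polynomial K → ℝ) (hν : IsVal ν) (f : Polynomial K) (hf : f ≠ 0) (n : ℕ) :
    ν (f ^ n) = n * ν f := by
  induction n with
  | zero => simpa using val_one' ν hν
  | succ m ih =>
    rw [pow_succ, hν.1 _ _ (pow_ne_zero _ hf) hf, ih]
    push_cast; ring

lemma val_prod' (ν : Polynomial K → ℝ) (hν : IsVal ν) {ι : Type*} (s : Finset ι)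
    (f : ι → Polynomial K) (hf : ∀ i ∈ s, f i ≠ 0) :
    ν (∏ i ∈ s, f i) = ∑ i ∈ s, ν (f i) := by
  classical
  induction s using Finset.induction with
  | empty => simpa using val_one' ν hν
  | insert a s hi ih =>
    rw [Finset.prod_insert hi, Finset.sum_insert hi,
      hν.1 _ _ (hf a (Finset.mem_insert_self a s))
        (Finset.prod_ne_zero_iff.mpr fun i hi' => hf i (Finset.mem_insert_of_mem hi')),
      ih fun i hi' => hf i (Finset.mem_insert_of_mem hi')]

lemma epsSet_finite (ν : Polynomial K → ℝ) (f : Polynomial K) :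
    {r : ℝ | ∃ b : ℕ, 1 ≤ b ∧ hasseDeriv b f ≠ 0 ∧
      r = (ν f - ν (hasseDeriv b f)) / b}.Finite := by
  apply Set.Finite.subset ((Set.finite_Icc 1 f.natDegree).image
    (fun b => (ν f - ν (hasseDeriv b f)) / b))
  rintro r ⟨b, hb1, hb2, rfl⟩
  refine ⟨b, ⟨hb1, ?_⟩, rfl⟩
  by_contra hlt
  push_neg at hlt
  exact hb2 (hasseDeriv_eq_zero_of_lt_natDegree f b hlt)

lemma le_eps (ν : Polynomial K → ℝ) (f : Polynomial K) (b : ℕ) (hb : 1 ≤ b)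
    (hne : hasseDeriv b f ≠ 0) : ν f - b * eps ν f ≤ ν (hasseDeriv b f) := by
  have hmem : (ν f - ν (hasseDeriv b f)) / b ∈
      {r : ℝ | ∃ b : ℕ, 1 ≤ b ∧ hasseDeriv b f ≠ 0 ∧
        r = (ν f - ν (hasseDeriv b f)) / b} := ⟨b, hb, hne, rfl⟩
  have hle := le_csSup (epsSet_finite ν f).bddAbove hmem
  have hb0 : (0:ℝ) < b := by exact_mod_cast hb
  rw [div_le_iff₀ hb0] at hle
  unfold eps
  nlinarith

/-- For a tuple `γ = (b₀, b₁, …, b_r)` with `r ≤ n`, `0 < b₁ ≤ … ≤ b_r` and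
`b₀ + b₁ + … + b_r = b`, the term
`T_γ = ∂_{b₀}(h) ⬝ ∏ ∂_{b_i}(Q) ⬝ Q^{n-r}` satisfies
`ν(T_γ) ≥ ν(h Q^n) - b ε(Q)`, with equality iff `b₀ = 0` and each `b_i ∈ I(Q)`. -/
theorem val_T_gamma (ν : Polynomial K → ℝ) (hν : IsVal ν)
    (Q : Polynomial K) (hQ : IsKeyPol ν Q)
    (h : Polynomial K) (hh : h ≠ 0) (hhd : h.natDegree < Q.natDegree)
    (n : ℕ) (hn : 0 < n) (b : ℕ) (hb : 1 ≤ b)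
    (r : ℕ) (hr : r ≤ n) (b₀ : ℕ) (bs : Fin r → ℕ)
    (hpos : ∀ i, 0 < bs i) (hmono : Monotone bs)
    (hsum : b₀ + ∑ i, bs i = b) :
    (hasseDeriv b₀ h * (∏ i, hasseDeriv (bs i) Q) * Q ^ (n - r) ≠ 0 →
      ν (h * Q ^ n) - b * eps ν Q ≤
        ν (hasseDeriv b₀ h * (∏ i, hasseDeriv (bs i) Q) * Q ^ (n - r))) ∧
    ((hasseDeriv b₀ h * (∏ i, hasseDeriv (bs i) Q) * Q ^ (n - r) ≠ 0 ∧
        ν (hasseDeriv b₀ h * (∏ i, hasseDeriv (bs i) Q) * Q ^ (n - r)) =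
          ν (h * Q ^ n) - b * eps ν Q) ↔
      (b₀ = 0 ∧ ∀ i, bs i ∈ Iset ν Q)) := by
  obtain ⟨hmon, hdeg, hkey⟩ := hQ
  have hQ0 : Q ≠ 0 := hmon.ne_zero
  set ε := eps ν Q with hε
  have hepsh : eps ν h < ε := hkey h hh hhd
  have hQpow : Q ^ (n - r) ≠ 0 := pow_ne_zero _ hQ0
  have hQn : Q ^ n ≠ 0 := pow_ne_zero _ hQ0
  have hRHS : ν (h * Q ^ n) = ν h + n * ν Q := by
    rw [hν.1 h _ hh hQn, val_pow' ν hν Q hQ0]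
  have hbcast : (b : ℝ) = b₀ + ∑ i, (bs i : ℝ) := by
    have := congrArg (Nat.cast : ℕ → ℝ) hsum
    push_cast at this
    linarith
  have hnr : ((n - r : ℕ) : ℝ) = (n : ℝ) - r := by
    exact Nat.cast_sub hr
  -- value of T when all factors are nonzero
  have hval : ∀ (h0 : hasseDeriv b₀ h ≠ 0) (hi : ∀ i, hasseDeriv (bs i) Q ≠ 0),
      ν (hasseDeriv b₀ h * (∏ i, hasseDeriv (bs i) Q) * Q ^ (n - r)) =
        ν (hasseDeriv b₀ h) + (∑ i, ν (hasseDeriv (bs i) Q)) + ((n : ℝ) - r) * ν Q := by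
    intro h0 hi
    have hprodne : (∏ i, hasseDeriv (bs i) Q) ≠ 0 :=
      Finset.prod_ne_zero_iff.mpr fun i _ => hi i
    rw [hν.1 _ _ (mul_ne_zero h0 hprodne) hQpow,
      hν.1 _ _ h0 hprodne, val_prod' ν hν _ _ (fun i _ => hi i),
      val_pow' ν hν Q hQ0, hnr]
  -- bounds on the Q-factors
  have hQbound : ∀ i, hasseDeriv (bs i) Q ≠ 0 →
      ν Q - (bs i : ℝ) * ε ≤ ν (hasseDeriv (bs i) Q) := fun i hi =>
    le_eps ν Q (bs i) (hpos i) hi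
  -- strict bound on the h-factor when b₀ ≠ 0
  have hhbound : hasseDeriv b₀ h ≠ 0 → b₀ ≠ 0 →
      ν h - (b₀ : ℝ) * ε < ν (hasseDeriv b₀ h) := by
    intro h0 hb₀
    have h1 : ν h - (b₀ : ℝ) * eps ν h ≤ ν (hasseDeriv b₀ h) :=
      le_eps ν h b₀ (Nat.one_le_iff_ne_zero.mpr hb₀) h0
    have hb0pos : (0:ℝ) < b₀ := by
      exact_mod_cast Nat.pos_of_ne_zero hb₀
    nlinarith
  have hS2 : ∑ i, ((ν Q) - (bs i : ℝ) * ε) =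
      (r : ℝ) * ν Q - (∑ i, (bs i : ℝ)) * ε := by
    rw [Finset.sum_sub_distrib, Finset.sum_const, Finset.card_univ, Fintype.card_fin,
      nsmul_eq_mul, Finset.sum_mul]
  constructor
  · -- inequality
    intro hT
    obtain ⟨h1, _⟩ := mul_ne_zero_iff.mp hT
    obtain ⟨h0, hprodne⟩ := mul_ne_zero_iff.mp h1
    have hi : ∀ i, hasseDeriv (bs i) Q ≠ 0 := fun i =>
      Finset.prod_ne_zero_iff.mp hprodne i (Finset.mem_univ i)
    have hsumge : ∑ i, ((ν Q) - (bs i : ℝ) * ε) ≤ ∑ i, ν (hasseDeriv (bs i) Q) :=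
      Finset.sum_le_sum fun i _ => hQbound i (hi i)
    have hhge : ν h - (b₀ : ℝ) * ε ≤ ν (hasseDeriv b₀ h) := by
      rcases Nat.eq_zero_or_pos b₀ with hb₀ | hb₀
      · subst hb₀; rw [hasseDeriv_zero'] at *; push_cast; linarith
      · exact le_of_lt (hhbound h0 hb₀.ne')
    rw [hval h0 hi, hRHS, hbcast]
    rw [hS2] at hsumge
    have hrn : (r : ℝ) ≤ n := by exact_mod_cast hr
    nlinarith
  · constructor
    · rintro ⟨hT, heq⟩
      obtain ⟨h1, _⟩ := mul_ne_zero_iff.mp hT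
      obtain ⟨h0, hprodne⟩ := mul_ne_zero_iff.mp h1
      have hi : ∀ i, hasseDeriv (bs i) Q ≠ 0 := fun i =>
        Finset.prod_ne_zero_iff.mp hprodne i (Finset.mem_univ i)
      rw [hval h0 hi, hRHS, hbcast] at heq
      have hAnn : ∀ i ∈ Finset.univ,
          (0:ℝ) ≤ ν (hasseDeriv (bs i) Q) - ((ν Q) - (bs i : ℝ) * ε) := fun i _ => by
        have := hQbound i (hi i); linarith
      have hAsumnn : (0:ℝ) ≤ ∑ i, (ν (hasseDeriv (bs i) Q) - ((ν Q) - (bs i : ℝ) * ε)) :=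
        Finset.sum_nonneg hAnn
      have hsumsplit : ∑ i, (ν (hasseDeriv (bs i) Q) - ((ν Q) - (bs i : ℝ) * ε)) =
          (∑ i, ν (hasseDeriv (bs i) Q)) - ((r : ℝ) * ν Q - (∑ i, (bs i : ℝ)) * ε) := by
        rw [Finset.sum_sub_distrib, hS2]
      -- first show b₀ = 0
      have hb₀ : b₀ = 0 := by
        by_contra hb₀
        have := hhbound h0 hb₀
        rw [hsumsplit] at hAsumnn
        nlinarith
      refine ⟨hb₀, fun i => ?_⟩
      -- now each A_i must vanish
      subst hb₀
      rw [hasseDeriv_zero'] at heq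
      have hAzero : ∑ i, (ν (hasseDeriv (bs i) Q) - ((ν Q) - (bs i : ℝ) * ε)) = 0 := by
        rw [hsumsplit]
        push_cast at heq ⊢
        nlinarith
      have := (Finset.sum_eq_zero_iff_of_nonneg hAnn).mp hAzero i (Finset.mem_univ i)
      exact ⟨hpos i, hi i, by linarith⟩
    · rintro ⟨hb₀, hI⟩
      subst hb₀
      have hi : ∀ i, hasseDeriv (bs i) Q ≠ 0 := fun i => (hI i).2.1
      have h0 : hasseDeriv 0 h ≠ 0 := by rwa [hasseDeriv_zero']
      have hprodne : (∏ i, hasseDeriv (bs i) Q) ≠ 0 :=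
        Finset.prod_ne_zero_iff.mpr fun i _ => hi i
      refine ⟨mul_ne_zero (mul_ne_zero h0 hprodne) hQpow, ?_⟩
      rw [hval h0 hi, hRHS, hbcast, hasseDeriv_zero']
      have hsum_eq : ∑ i, ν (hasseDeriv (bs i) Q) = ∑ i, ((ν Q) - (bs i : ℝ) * ε) :=
        Finset.sum_congr rfl fun i _ => (hI i).2.2
      rw [hsum_eq, hS2]
      push_cast
      ring
end
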